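/- Assume a·‖κ‖_{L^∞(ℝ)} < 1 and additionally that R′ is (globally) essentially bounded on ℝ. Then there exist constants 0 < c ≤ C such that for every ψ ∈ C_c^∞(ℝ×ω): c·( ∫_{ℝ×ω} |∇ψ|^p + ∫_{ℝ×ω} |ψ|^p ) ≤ Q[ψ] + ‖ψ‖^p ≤ C·( ∫_{ℝ×ω} |∇ψ|^p + ∫_{ℝ×ω} |ψ|^p ); that is, the curvilinear Sobolev norm (Q[ψ] + ‖ψ‖^p)^{1/p} is equivalent to the usual W^{1,p}(ℝ×ω) norm, so W_0^{1,p}(Ω_0,g) = W_0^{1,p}(Ω_0). -/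

import Mathlib

open MeasureTheory Set Filter Matrix

noncomputable section

abbrev E (m : ℕ) := EuclideanSpace ℝ (Fin m)

def lam1 (p : ℝ) {m : ℕ} (Ω : Set (E m)) : ℝ :=
  sInf {r : ℝ | ∃ u : E m → ℝ, ContDiff ℝ (⊤ : ℕ∞) u ∧ HasCompactSupport u ∧
    tsupport u ⊆ Ω ∧ u ≠ 0 ∧
    r = (∫ x in Ω, ‖fderiv ℝ u x‖ ^ p) / (∫ x in Ω, |u x| ^ p)}

def tube {m : ℕ} (ω : Set (E m)) : Set (ℝ × E m) := Set.univ ×ˢ ω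

def dS {m : ℕ} (ψ : ℝ × E m → ℝ) (x : ℝ × E m) : ℝ := fderiv ℝ ψ x (1, 0)

def dT {m : ℕ} (ψ : ℝ × E m → ℝ) (x : ℝ × E m) (μ : Fin m) : ℝ :=
  fderiv ℝ ψ x (0, EuclideanSpace.single μ 1)

def Rd {m : ℕ} (R : ℝ → Matrix (Fin m) (Fin m) ℝ) (s : ℝ) : Matrix (Fin m) (Fin m) ℝ :=
  fun i j => deriv (fun s' => R s' i j) s

def Fvec {m : ℕ} (R : ℝ → Matrix (Fin m) (Fin m) ℝ) (s : ℝ) (t : E m) (μ : Fin m) : ℝ :=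
  ∑ α, ∑ β, t α * Rd R s α β * R s μ β

def fJac {m : ℕ} (R : ℝ → Matrix (Fin m) (Fin m) ℝ) (k : ℝ → E m) (s : ℝ) (t : E m) : ℝ :=
  1 - ∑ α, ∑ β, t α * R s α β * k s β

def Qf (p : ℝ) {m : ℕ} (f : ℝ → E m → ℝ) (F : ℝ → E m → Fin m → ℝ)
    (S : Set (ℝ × E m)) (ψ : ℝ × E m → ℝ) : ℝ :=
  ∫ x in S, (|(dS ψ x - ∑ μ, F x.1 x.2 μ * dT ψ x μ) / f x.1 x.2| ^ 2
      + ∑ μ, dT ψ x μ ^ 2) ^ (p / 2) * f x.1 x.2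

def Nf (p : ℝ) {m : ℕ} (f : ℝ → E m → ℝ) (S : Set (ℝ × E m)) (ψ : ℝ × E m → ℝ) : ℝ :=
  ∫ x in S, |ψ x| ^ p * f x.1 x.2

def lamT (p : ℝ) {m : ℕ} (ω : Set (E m)) (f : ℝ → E m → ℝ) (F : ℝ → E m → Fin m → ℝ) : ℝ :=
  sInf {r : ℝ | ∃ ψ : ℝ × E m → ℝ, ContDiff ℝ (⊤ : ℕ∞) ψ ∧ HasCompactSupport ψ ∧
    tsupport ψ ⊆ tube ω ∧ ψ ≠ 0 ∧
    r = Qf p f F (tube ω) ψ / Nf p f (tube ω) ψ}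

def lamInfT (p : ℝ) {m : ℕ} (ω : Set (E m)) (f : ℝ → E m → ℝ) (F : ℝ → E m → Fin m → ℝ) : ℝ :=
  sSup {r : ℝ | ∃ K : Set (ℝ × E m), IsCompact K ∧ K ⊆ tube ω ∧
    r = sInf {q : ℝ | ∃ ψ : ℝ × E m → ℝ, ContDiff ℝ (⊤ : ℕ∞) ψ ∧ HasCompactSupport ψ ∧
      tsupport ψ ⊆ tube ω \ K ∧ ψ ≠ 0 ∧
      q = Qf p f F (tube ω) ψ / Nf p f (tube ω) ψ}}


/-- `|∇u|^p` (Euclidean norm of the full gradient, to the power `p`) on `ℝ × ℝ^m`. -/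
def gradP (p : ℝ) {m : ℕ} (u : ℝ × E m → ℝ) (x : ℝ × E m) : ℝ :=
  (dS u x ^ 2 + ∑ μ, dT u x μ ^ 2) ^ (p / 2)

/-!
Orthogonality of `R` pins the Jacobian `f = 1 - ⟨t, R k⟩` between `1 - a‖κ‖_∞ > 0` and
`1 + a‖κ‖_∞`, and bounds the shear coefficients `f_μ` by `a · sup |R'|`. Pointwise, the
curvilinear gradient `((∂_s ψ - Σ f_μ ∂_μ ψ) / f, ∇_t ψ)` is then the image of `∇ψ` under a shear
with uniformly bounded distortion in both directions, so the energy densities (and the weights `f`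
in front of `|ψ|^p`) are comparable with constants independent of `ψ`; integrate.
-/

theorem abs_sum_mul_orthogonal_le {m : ℕ} {A : Matrix (Fin m) (Fin m) ℝ} (hA : A * Aᵀ = 1)
    (t v : E m) : |∑ α, ∑ β, t α * A α β * v β| ≤ ‖t‖ * ‖v‖ := by
  have hu : toEuclideanCLM (𝕜 := ℝ) A ∈ unitary _ :=
    Unitary.map_mem _ ((mem_orthogonalGroup_iff (Fin m) ℝ).mpr hA)
  have hinner : ∑ α, ∑ β, t α * A α β * v β = inner ℝ t (toEuclideanCLM (𝕜 := ℝ) A v) := by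
    simp only [inner_toEuclideanCLM, dotProduct, mulVec, Finset.mul_sum, mul_assoc]
  rw [hinner, ← ContinuousLinearMap.norm_map_of_mem_unitary hu v]
  exact abs_real_inner_le_norm _ _

theorem abs_sum_mul_le_of_entry_le {m : ℕ} {A D : Matrix (Fin m) (Fin m) ℝ}
    (hAD : ∀ α β, |A α β| ≤ D α β) (t : E m) {w : Fin m → ℝ} (hw : ∀ β, |w β| ≤ 1) :
    |∑ α, ∑ β, t α * A α β * w β| ≤ ‖t‖ * ∑ α, ∑ β, D α β := by
  rw [Finset.mul_sum]
  refine (Finset.abs_sum_le_sum_abs _ _).trans (Finset.sum_le_sum fun α _ => ?_)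
  rw [Finset.mul_sum]
  refine (Finset.abs_sum_le_sum_abs _ _).trans (Finset.sum_le_sum fun β _ => ?_)
  rw [abs_mul, abs_mul]
  have hD : 0 ≤ D α β := (abs_nonneg _).trans (hAD α β)
  calc |t α| * |A α β| * |w β| ≤ ‖t‖ * D α β * 1 := by
        gcongr
        · simpa using PiLp.norm_apply_le t α
        · exact hAD α β
        · exact hw β
    _ = ‖t‖ * D α β := mul_one _

section TubeCoordinates

variable {m : ℕ} {R : ℝ → Matrix (Fin m) (Fin m) ℝ}

theorem measurable_fJac (hR : ∀ i j, Measurable fun s => R s i j) {k : ℝ → E m}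
    (hk : Measurable k) : Measurable fun x : ℝ × E m => fJac R k x.1 x.2 := by
  unfold fJac
  fun_prop

theorem measurable_Fvec (hR : ∀ i j, Measurable fun s => R s i j) (μ : Fin m) :
    Measurable fun x : ℝ × E m => Fvec R x.1 x.2 μ := by
  have (i j : Fin m) : Measurable fun s => Rd R s i j := measurable_deriv _
  unfold Fvec
  fun_prop

theorem abs_fJac_sub_one_le (k : ℝ → E m) {s : ℝ} (hR : R s * (R s)ᵀ = 1) (t : E m) :
    |fJac R k s t - 1| ≤ ‖t‖ * ‖k s‖ := by
  rw [fJac, sub_sub_cancel_left, abs_neg]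
  exact abs_sum_mul_orthogonal_le hR t (k s)

theorem abs_Fvec_le {D : Matrix (Fin m) (Fin m) ℝ} {s : ℝ} (hR : R s * (R s)ᵀ = 1)
    (hD : ∀ α β, |Rd R s α β| ≤ D α β) (t : E m) (μ : Fin m) :
    |Fvec R s t μ| ≤ ‖t‖ * ∑ α, ∑ β, D α β :=
  abs_sum_mul_le_of_entry_le hD t fun β =>
    by simpa using entry_norm_bound_of_unitary ((mem_orthogonalGroup_iff (Fin m) ℝ).mpr hR) μ β

end TubeCoordinates

section ShearedGradient

variable {m : ℕ} {B f u : ℝ} {v F : Fin m → ℝ}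

theorem sq_sum_mul_le (hF : ∀ μ, |F μ| ≤ B) :
    (∑ μ, F μ * v μ) ^ 2 ≤ m * B ^ 2 * ∑ μ, v μ ^ 2 := by
  have hF2 : ∑ μ, F μ ^ 2 ≤ m * B ^ 2 := by
    calc ∑ μ, F μ ^ 2 ≤ ∑ _μ : Fin m, B ^ 2 :=
          Finset.sum_le_sum fun μ _ => sq_abs (F μ) ▸ pow_le_pow_left₀ (abs_nonneg _) (hF μ) 2
      _ = m * B ^ 2 := by simp
  calc (∑ μ, F μ * v μ) ^ 2 ≤ (∑ μ, F μ ^ 2) * ∑ μ, v μ ^ 2 := Finset.sum_mul_sq_le_sq_mul_sq _ _ _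
    _ ≤ m * B ^ 2 * ∑ μ, v μ ^ 2 := by gcongr

theorem sq_add_le_mul_sheared {fU : ℝ} (hf : 0 < f) (hfU : f ≤ fU) (hF : ∀ μ, |F μ| ≤ B) :
    u ^ 2 + ∑ μ, v μ ^ 2 ≤ (2 * fU ^ 2 + 2 * m * B ^ 2 + 1) *
      (((u - ∑ μ, F μ * v μ) / f) ^ 2 + ∑ μ, v μ ^ 2) := by
  set w := ∑ μ, F μ * v μ
  set S := ∑ μ, v μ ^ 2
  have hS : 0 ≤ S := Finset.sum_nonneg fun μ _ => sq_nonneg _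
  have hw := sq_sum_mul_le (v := v) hF
  have hQ : (u - w) ^ 2 = f ^ 2 * ((u - w) / f) ^ 2 := by field_simp
  have hf2 : f ^ 2 ≤ fU ^ 2 := pow_le_pow_left₀ hf.le hfU 2
  nlinarith [sq_nonneg (u - 2 * w), sq_nonneg ((u - w) / f), sq_nonneg B,
    mul_le_mul_of_nonneg_right hf2 (sq_nonneg ((u - w) / f)), mul_nonneg (sq_nonneg fU) hS,
    mul_nonneg (mul_nonneg m.cast_nonneg (sq_nonneg B)) (sq_nonneg ((u - w) / f))]

theorem sheared_le_mul_sq_add {fL : ℝ} (hfL : 0 < fL) (hf : fL ≤ f) (hF : ∀ μ, |F μ| ≤ B) :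
    ((u - ∑ μ, F μ * v μ) / f) ^ 2 + ∑ μ, v μ ^ 2 ≤
      (2 * (1 + m * B ^ 2) / fL ^ 2 + 1) * (u ^ 2 + ∑ μ, v μ ^ 2) := by
  set w := ∑ μ, F μ * v μ
  set S := ∑ μ, v μ ^ 2
  have hS : 0 ≤ S := Finset.sum_nonneg fun μ _ => sq_nonneg _
  have hw := sq_sum_mul_le (v := v) hF
  have hnum : (u - w) ^ 2 ≤ 2 * (1 + m * B ^ 2) * (u ^ 2 + S) := by
    nlinarith [sq_nonneg (u + w), sq_nonneg u, sq_nonneg B,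
      mul_nonneg (mul_nonneg m.cast_nonneg (sq_nonneg B)) (sq_nonneg u)]
  have hQ : ((u - w) / f) ^ 2 ≤ 2 * (1 + m * B ^ 2) / fL ^ 2 * (u ^ 2 + S) := by
    rw [div_pow, div_mul_eq_mul_div]
    exact div_le_div₀ (by positivity) hnum (by positivity) (pow_le_pow_left₀ hfL.le hf 2)
  nlinarith [sq_nonneg u]

end ShearedGradient

theorem rpow_le_mul_rpow_of_le_mul {x y Λ r : ℝ} (hx : 0 ≤ x) (hy : 0 ≤ y) (hΛ : 0 ≤ Λ)
    (hr : 0 ≤ r) (h : x ≤ Λ * y) : x ^ r ≤ Λ ^ r * y ^ r :=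
  (Real.rpow_le_rpow hx h hr).trans_eq (Real.mul_rpow hΛ hy)

def QfIntegrand (p : ℝ) {m : ℕ} (f : ℝ → E m → ℝ) (F : ℝ → E m → Fin m → ℝ)
    (ψ : ℝ × E m → ℝ) (x : ℝ × E m) : ℝ :=
  (|(dS ψ x - ∑ μ, F x.1 x.2 μ * dT ψ x μ) / f x.1 x.2| ^ 2 + ∑ μ, dT ψ x μ ^ 2) ^ (p / 2)
    * f x.1 x.2

section Integrand

variable {p : ℝ} {m : ℕ} {f : ℝ → E m → ℝ} {F : ℝ → E m → Fin m → ℝ} {ψ : ℝ × E m → ℝ}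
  {x : ℝ × E m} {fL fU B : ℝ}

theorem mul_gradP_le_QfIntegrand (hp : 0 ≤ p) (hfL : 0 < fL) (hf : f x.1 x.2 ∈ Icc fL fU)
    (hF : ∀ μ, |F x.1 x.2 μ| ≤ B) :
    fL / (2 * fU ^ 2 + 2 * m * B ^ 2 + 1) ^ (p / 2) * gradP p ψ x ≤ QfIntegrand p f F ψ x := by
  have hΛ : 0 < (2 * fU ^ 2 + 2 * m * B ^ 2 + 1) ^ (p / 2) := by positivity
  have hcmp := rpow_le_mul_rpow_of_le_mul (r := p / 2) (by positivity) (by positivity)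
    (by positivity) (by positivity)
    (sq_add_le_mul_sheared (u := dS ψ x) (v := dT ψ x) (hfL.trans_le hf.1) hf.2 hF)
  rw [gradP, QfIntegrand, sq_abs, div_mul_eq_mul_div, div_le_iff₀ hΛ]
  have hQ : 0 ≤ (((dS ψ x - ∑ μ, F x.1 x.2 μ * dT ψ x μ) / f x.1 x.2) ^ 2
      + ∑ μ, dT ψ x μ ^ 2) ^ (p / 2) := by positivity
  calc fL * _ ≤ fL * (_ * _) := by gcongr
    _ ≤ _ := by nlinarith [mul_le_mul_of_nonneg_left hf.1 (mul_nonneg hQ hΛ.le)]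

theorem QfIntegrand_le_mul_gradP (hp : 0 ≤ p) (hfL : 0 < fL) (hf : f x.1 x.2 ∈ Icc fL fU)
    (hF : ∀ μ, |F x.1 x.2 μ| ≤ B) :
    QfIntegrand p f F ψ x ≤ fU * (2 * (1 + m * B ^ 2) / fL ^ 2 + 1) ^ (p / 2) * gradP p ψ x := by
  have hf0 : 0 ≤ f x.1 x.2 := hfL.le.trans hf.1
  have hcmp := rpow_le_mul_rpow_of_le_mul (r := p / 2) (by positivity) (by positivity)
    (by positivity) (by positivity)
    (sheared_le_mul_sq_add (u := dS ψ x) (v := dT ψ x) hfL hf.1 hF)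
  rw [gradP, QfIntegrand, sq_abs, mul_assoc, mul_comm fU]
  gcongr
  exact hf.2

end Integrand

section Regularity

variable {p : ℝ} {m : ℕ} {ψ : ℝ × E m → ℝ}

theorem continuous_dS (hψ : ContDiff ℝ 1 ψ) : Continuous (dS ψ) :=
  (hψ.continuous_fderiv one_ne_zero).clm_apply continuous_const

theorem continuous_dT (hψ : ContDiff ℝ 1 ψ) (μ : Fin m) : Continuous fun x => dT ψ x μ :=
  (hψ.continuous_fderiv one_ne_zero).clm_apply continuous_const

theorem integrable_gradP (hp : 0 < p) (hψ : ContDiff ℝ 1 ψ) (hψc : HasCompactSupport ψ) :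
    Integrable (gradP p ψ) := by
  refine Continuous.integrable_of_hasCompactSupport ?_ ?_
  · exact (((continuous_dS hψ).pow 2).add (continuous_finsetSum _ fun μ _ =>
      (continuous_dT hψ μ).pow 2)).rpow_const fun _ => Or.inr (by positivity)
  · refine (hψc.fderiv ℝ).comp_left (g := fun L : ℝ × E m →L[ℝ] ℝ =>
      (L (1, 0) ^ 2 + ∑ μ, L (0, EuclideanSpace.single μ 1) ^ 2) ^ (p / 2)) ?_
    simp [Real.zero_rpow (by positivity : p / 2 ≠ 0)]

theorem measurable_QfIntegrand {f : ℝ → E m → ℝ} {F : ℝ → E m → Fin m → ℝ}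
    (hf : Measurable fun x : ℝ × E m => f x.1 x.2)
    (hF : ∀ μ, Measurable fun x : ℝ × E m => F x.1 x.2 μ) (hψ : ContDiff ℝ 1 ψ) :
    Measurable (QfIntegrand p f F ψ) := by
  have hdS := (continuous_dS hψ).measurable
  have hdT (μ : Fin m) := (continuous_dT hψ μ).measurable
  unfold QfIntegrand
  fun_prop

end Regularity

theorem integrable_abs_rpow {X : Type*} [TopologicalSpace X] [MeasurableSpace X]
    [OpensMeasurableSpace X] {μ : Measure X} [IsFiniteMeasureOnCompacts μ] {g : X → ℝ} {p : ℝ}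
    (hp : 0 < p) (hg : Continuous g) (hgc : HasCompactSupport g) :
    Integrable (fun x => |g x| ^ p) μ :=
  (hg.abs.rpow_const fun _ => Or.inr hp.le).integrable_of_hasCompactSupport
    (hgc.comp_left (g := fun y : ℝ => |y| ^ p) (by simp [Real.zero_rpow hp.ne']))

theorem setIntegral_sandwich {X : Type*} [MeasurableSpace X] {μ : Measure X} {S : Set X}
    (hS : MeasurableSet S) {g h : X → ℝ} (hg : IntegrableOn g S μ)
    (hh : AEStronglyMeasurable h μ) {c C : ℝ} (h0 : ∀ x ∈ S, 0 ≤ h x)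
    (hlow : ∀ x ∈ S, c * g x ≤ h x) (hup : ∀ x ∈ S, h x ≤ C * g x) :
    c * ∫ x in S, g x ∂μ ≤ ∫ x in S, h x ∂μ ∧ ∫ x in S, h x ∂μ ≤ C * ∫ x in S, g x ∂μ := by
  have hhi : IntegrableOn h S μ := (hg.const_mul C).mono' hh.restrict <|
    (ae_restrict_iff' hS).mpr <| Eventually.of_forall fun x hx => by
      rw [Real.norm_of_nonneg (h0 x hx)]; exact hup x hx
  rw [← integral_const_mul, ← integral_const_mul]
  exact ⟨setIntegral_mono_on (hg.const_mul c) hhi hS hlow,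
    setIntegral_mono_on hhi (hg.const_mul C) hS hup⟩

theorem exists_Qf_add_Nf_comparable {m : ℕ} {p : ℝ} (hp : 0 < p) {ω : Set (E m)}
    (hω : MeasurableSet ω) {f : ℝ → E m → ℝ} {F : ℝ → E m → Fin m → ℝ}
    (hfm : Measurable fun x : ℝ × E m => f x.1 x.2)
    (hFm : ∀ μ, Measurable fun x : ℝ × E m => F x.1 x.2 μ) {fL fU B : ℝ} (hfL : 0 < fL)
    (hfLU : fL ≤ fU) (hf : ∀ s, ∀ t ∈ ω, f s t ∈ Icc fL fU)
    (hF : ∀ s, ∀ t ∈ ω, ∀ μ, |F s t μ| ≤ B) :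
    ∃ c C : ℝ, 0 < c ∧ c ≤ C ∧
      ∀ ψ : ℝ × E m → ℝ, ContDiff ℝ 1 ψ → HasCompactSupport ψ →
        (c * ((∫ x in tube ω, gradP p ψ x) + ∫ x in tube ω, |ψ x| ^ p)
            ≤ Qf p f F (tube ω) ψ + Nf p f (tube ω) ψ) ∧
        (Qf p f F (tube ω) ψ + Nf p f (tube ω) ψ
            ≤ C * ((∫ x in tube ω, gradP p ψ x) + ∫ x in tube ω, |ψ x| ^ p)) := by
  have hΛ₁ : 1 ≤ (2 * fU ^ 2 + 2 * m * B ^ 2 + 1) ^ (p / 2) :=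
    Real.one_le_rpow (by nlinarith [sq_nonneg fU, sq_nonneg B, m.cast_nonneg (α := ℝ)])
      (by positivity)
  have hΛ₂ : 1 ≤ (2 * (1 + m * B ^ 2) / fL ^ 2 + 1) ^ (p / 2) :=
    Real.one_le_rpow (le_add_of_nonneg_left (by positivity)) (by positivity)
  have hc : fL / (2 * fU ^ 2 + 2 * m * B ^ 2 + 1) ^ (p / 2) ≤ fL := div_le_self hfL.le hΛ₁
  have hC : fU ≤ fU * (2 * (1 + m * B ^ 2) / fL ^ 2 + 1) ^ (p / 2) :=
    le_mul_of_one_le_right (hfL.le.trans hfLU) hΛ₂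
  refine ⟨_, _, by positivity, hc.trans (hfLU.trans hC), fun ψ hψ hψc => ?_⟩
  have hS : MeasurableSet (tube ω) := MeasurableSet.univ.prod hω
  have hfx : ∀ x ∈ tube ω, f x.1 x.2 ∈ Icc fL fU := fun x hx => hf x.1 x.2 hx.2
  have hf0 : ∀ x ∈ tube ω, 0 ≤ f x.1 x.2 := fun x hx => hfL.le.trans (hfx x hx).1
  obtain ⟨hQlow, hQup⟩ := setIntegral_sandwich hS (integrable_gradP hp hψ hψc).integrableOn
    (measurable_QfIntegrand hfm hFm hψ).aestronglyMeasurable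
    (fun x hx => mul_nonneg (by positivity) (hf0 x hx))
    (fun x hx => mul_gradP_le_QfIntegrand hp.le hfL (hfx x hx) (hF _ _ hx.2))
    (fun x hx => QfIntegrand_le_mul_gradP hp.le hfL (hfx x hx) (hF _ _ hx.2))
  obtain ⟨hNlow, hNup⟩ := setIntegral_sandwich (h := fun x => |ψ x| ^ p * f x.1 x.2) hS
    (integrable_abs_rpow (μ := volume) hp hψ.continuous hψc).integrableOn
    ((hψ.continuous.abs.rpow_const fun _ => Or.inr hp.le).measurable.mul hfm).aestronglyMeasurable
    (fun x hx => mul_nonneg (by positivity) (hf0 x hx))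
    (fun x hx => by rw [mul_comm]; gcongr; exact hc.trans (hfx x hx).1)
    (fun x hx => by rw [mul_comm]; gcongr; exact (hfx x hx).2.trans hC)
  rw [mul_add, mul_add]
  exact ⟨add_le_add hQlow hNlow, add_le_add hQup hNup⟩

theorem stmt_16_general {m : ℕ} (p : ℝ) (hp : 1 < p)
    (ω : Set (E m)) (hωopen : IsOpen ω)
    (hωbdd : Bornology.IsBounded ω)
    (k : ℝ → E m) (hkmeas : Measurable k)
    (hkbdd : BddAbove (Set.range fun s => ‖k s‖))
    (R : ℝ → Matrix (Fin m) (Fin m) ℝ)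
    (hRorth : ∀ s, R s * (R s)ᵀ = 1)
    (hRdiff : ∀ i j, Differentiable ℝ fun s => R s i j)
    (hRdbd : ∀ i j, BddAbove (Set.range fun s => |Rd R s i j|))
    (a : ℝ) (ha : a = sSup ((fun t : E m => ‖t‖) '' ω))
    (K : ℝ) (hK : K = sSup (Set.range fun s => ‖k s‖))
    (hsmall : a * K < 1) :
    ∃ c C : ℝ, 0 < c ∧ c ≤ C ∧
      ∀ ψ : ℝ × E m → ℝ, ContDiff ℝ (⊤ : ℕ∞) ψ → HasCompactSupport ψ →
        tsupport ψ ⊆ tube ω →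
        (c * ((∫ x in tube ω, gradP p ψ x) + ∫ x in tube ω, |ψ x| ^ p)
            ≤ Qf p (fJac R k) (Fvec R) (tube ω) ψ + Nf p (fJac R k) (tube ω) ψ) ∧
        (Qf p (fJac R k) (Fvec R) (tube ω) ψ + Nf p (fJac R k) (tube ω) ψ
            ≤ C * ((∫ x in tube ω, gradP p ψ x) + ∫ x in tube ω, |ψ x| ^ p)) := by
  have hRm (i j : Fin m) : Measurable fun s => R s i j := (hRdiff i j).continuous.measurable
  have hta : ∀ t ∈ ω, ‖t‖ ≤ a := fun t ht =>
    ha ▸ le_csSup (lipschitzWith_one_norm.isBounded_image hωbdd).bddAbove ⟨t, ht, rfl⟩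
  have hkK (s : ℝ) : ‖k s‖ ≤ K := hK ▸ le_csSup hkbdd ⟨s, rfl⟩
  have ha0 : 0 ≤ a := ha ▸ Real.sSup_nonneg (by rintro _ ⟨t, -, rfl⟩; exact norm_nonneg t)
  have hK0 : 0 ≤ K := (norm_nonneg _).trans (hkK 0)
  choose D hD using hRdbd
  have hD0 : 0 ≤ ∑ α, ∑ β, D α β := Finset.sum_nonneg fun α _ => Finset.sum_nonneg fun β _ =>
    (abs_nonneg _).trans (hD α β ⟨0, rfl⟩)
  have hfJ (s : ℝ) (t : E m) (ht : t ∈ ω) : fJac R k s t ∈ Icc (1 - a * K) (1 + a * K) := by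
    have := (abs_fJac_sub_one_le k (hRorth s) t).trans
      (mul_le_mul (hta t ht) (hkK s) (norm_nonneg _) ha0)
    constructor <;> linarith [abs_le.mp this]
  have hF (s : ℝ) (t : E m) (ht : t ∈ ω) (μ : Fin m) : |Fvec R s t μ| ≤ a * ∑ α, ∑ β, D α β :=
    (abs_Fvec_le (hRorth s) (fun α β => hD α β ⟨s, rfl⟩) t μ).trans
      (mul_le_mul_of_nonneg_right (hta t ht) hD0)
  obtain ⟨c, C, hc, hcC, hcmp⟩ := exists_Qf_add_Nf_comparable (p := p) (by linarith)
    hωopen.measurableSet (measurable_fJac hRm hkmeas) (measurable_Fvec hRm) (by linarith)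
    (by linarith [mul_nonneg ha0 hK0]) hfJ hF
  exact ⟨c, C, hc, hcC, fun ψ hψ hψc _ => hcmp ψ (hψ.of_le (by simp)) hψc⟩

/-- Norm equivalence: if `a·‖κ‖_∞ < 1` and `R'` is globally bounded, then the
curvilinear energy `Q[ψ] + ‖ψ‖^p` is comparable to the usual `W^{1,p}` norm
`∫ |∇ψ|^p + ∫ |ψ|^p` on the straight tube, with two-sided constants `0 < c ≤ C`;
hence `W₀^{1,p}(Ω₀,g) = W₀^{1,p}(Ω₀)`. -/
theorem stmt_16 {m : ℕ} (hm : 1 ≤ m) (p : ℝ) (hp : 1 < p)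
    (ω : Set (E m)) (hωopen : IsOpen ω) (hωne : ω.Nonempty)
    (hωbdd : Bornology.IsBounded ω) (hωconn : IsConnected ω)
    (k : ℝ → E m) (hkmeas : Measurable k)
    (hkbdd : BddAbove (Set.range fun s => ‖k s‖))
    (R : ℝ → Matrix (Fin m) (Fin m) ℝ)
    (hRorth : ∀ s, R s * (R s)ᵀ = 1) (hRdet : ∀ s, (R s).det = 1)
    (hRdiff : ∀ i j, Differentiable ℝ fun s => R s i j)
    (hRdbd : ∀ i j, BddAbove (Set.range fun s => |Rd R s i j|))
    (a : ℝ) (ha : a = sSup ((fun t : E m => ‖t‖) '' ω))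
    (K : ℝ) (hK : K = sSup (Set.range fun s => ‖k s‖))
    (hsmall : a * K < 1) :
    ∃ c C : ℝ, 0 < c ∧ c ≤ C ∧
      ∀ ψ : ℝ × E m → ℝ, ContDiff ℝ (⊤ : ℕ∞) ψ → HasCompactSupport ψ →
        tsupport ψ ⊆ tube ω →
        (c * ((∫ x in tube ω, gradP p ψ x) + ∫ x in tube ω, |ψ x| ^ p)
            ≤ Qf p (fJac R k) (Fvec R) (tube ω) ψ + Nf p (fJac R k) (tube ω) ψ) ∧
        (Qf p (fJac R k) (Fvec R) (tube ω) ψ + Nf p (fJac R k) (tube ω) ψ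
            ≤ C * ((∫ x in tube ω, gradP p ψ x) + ∫ x in tube ω, |ψ x| ^ p)) :=
  stmt_16_general p hp ω hωopen hωbdd k hkmeas hkbdd R hRorth hRdiff hRdbd a ha K hK hsmall
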